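/- For n ≥ 0 and real 0 < q < 1 and x, y ≥ 0, the addition formula E_{n,q}(x+y) = Σ_{i=0}^{n} C(n,i) q^{x i} E_{i,q}(y) [x]_q^{n-i} holds. -/

import Mathlib

/-!
Since `q ^ (m + x + y) = q ^ x * q ^ (m + y)`, the q-number satisfies
`[x + z]_q = [x]_q + q ^ x [z]_q`; expanding `[m + x + y]_q ^ n` binomially inside the defining
series of `E_{n,q}(x + y)` and exchanging the finite sum with the absolutely convergent series
gives the formula.
-/

open Finset

/-- q-analogue [z]_q = (1 - q^z)/(1 - q) (real rpow). -/
noncomputable def qn (q z : ℝ) : ℝ := (1 - q ^ z) / (1 - q)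

/-- q-Euler polynomial E_{n,q}(x) = [2]_q Σ_{m} (-1)^m q^m [m+x]_q^n. -/
noncomputable def qE (n : ℕ) (q x : ℝ) : ℝ :=
  (1 + q) * ∑' m : ℕ, (-1 : ℝ) ^ m * q ^ m * (qn q ((m : ℝ) + x)) ^ n

/-- Alternating q-power sum S*_{n,i,q}(a). -/
noncomputable def qS (n i a : ℕ) (q : ℝ) : ℝ :=
  ∑ j ∈ Finset.range a, (-1 : ℝ) ^ j * q ^ ((n + 1 - i) * j) * (qn q (j : ℝ)) ^ i

theorem qn_add {q : ℝ} (hq : 0 < q) (a b : ℝ) : qn q (a + b) = qn q a + q ^ a * qn q b := by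
  simp only [qn, Real.rpow_add hq]
  ring

theorem qn_add_pow {q : ℝ} (hq : 0 < q) (a b : ℝ) (n : ℕ) :
    qn q (a + b) ^ n = ∑ i ∈ range (n + 1),
      (n.choose i : ℝ) * q ^ (a * (i : ℝ)) * qn q b ^ i * qn q a ^ (n - i) := by
  rw [qn_add hq, add_comm, add_pow]
  refine sum_congr rfl fun i _ => ?_
  rw [Real.rpow_mul hq.le, Real.rpow_natCast, mul_pow]
  ring

theorem qn_nonneg {q z : ℝ} (hq0 : 0 ≤ q) (hq1 : q < 1) (hz : 0 ≤ z) : 0 ≤ qn q z :=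
  div_nonneg (sub_nonneg.2 (Real.rpow_le_one hq0 hq1.le hz)) (sub_nonneg.2 hq1.le)

theorem qn_le_inv_one_sub {q z : ℝ} (hq0 : 0 ≤ q) (hq1 : q < 1) : qn q z ≤ (1 - q)⁻¹ := by
  rw [qn, div_eq_mul_inv]
  exact mul_le_of_le_one_left (inv_nonneg.2 (sub_nonneg.2 hq1.le))
    (sub_le_self _ (Real.rpow_nonneg hq0 z))

theorem summable_qE_series {q y : ℝ} (hq0 : 0 ≤ q) (hq1 : q < 1) (hy : 0 ≤ y) (n : ℕ) :
    Summable fun m : ℕ => (-1 : ℝ) ^ m * q ^ m * qn q ((m : ℝ) + y) ^ n := by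
  refine Summable.of_norm_bounded
    ((summable_geometric_of_lt_one hq0 hq1).mul_right ((1 - q)⁻¹ ^ n)) fun m => ?_
  have hqn := qn_nonneg hq0 hq1 (add_nonneg m.cast_nonneg hy)
  rw [norm_mul, norm_mul, norm_pow, norm_neg, norm_one, one_pow, one_mul, norm_pow,
    Real.norm_of_nonneg hq0, norm_pow, Real.norm_of_nonneg hqn]
  gcongr
  exact qn_le_inv_one_sub hq0 hq1

theorem qEuler_addition_general (q : ℝ) (hq0 : 0 < q) (hq1 : q < 1) (x y : ℝ)
    (hy : 0 ≤ y) (n : ℕ) :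
    qE n q (x + y) = ∑ i ∈ Finset.range (n + 1),
      (n.choose i : ℝ) * q ^ (x * (i : ℝ)) * qE i q y * (qn q x) ^ (n - i) := by
  have expand : ∀ m : ℕ, (-1 : ℝ) ^ m * q ^ m * qn q ((m : ℝ) + (x + y)) ^ n =
      ∑ i ∈ range (n + 1), (n.choose i : ℝ) * q ^ (x * (i : ℝ)) * qn q x ^ (n - i) *
        ((-1 : ℝ) ^ m * q ^ m * qn q ((m : ℝ) + y) ^ i) := by
    intro m
    rw [add_left_comm, qn_add_pow hq0, mul_sum]
    refine sum_congr rfl fun i _ => ?_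
    ring
  simp only [qE]
  rw [tsum_congr expand, Summable.tsum_finsetSum fun i _ =>
    (summable_qE_series hq0.le hq1 hy i).mul_left _, mul_sum]
  refine sum_congr rfl fun i _ => ?_
  rw [tsum_mul_left]
  ring

theorem qEuler_addition (q : ℝ) (hq0 : 0 < q) (hq1 : q < 1) (x y : ℝ) (hx : 0 ≤ x)
    (hy : 0 ≤ y) (n : ℕ) :
    qE n q (x + y) = ∑ i ∈ Finset.range (n + 1),
      (n.choose i : ℝ) * q ^ (x * (i : ℝ)) * qE i q y * (qn q x) ^ (n - i) :=
  qEuler_addition_general q hq0 hq1 x y hy n
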